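/- arXiv:1308.3078 — 2 statements merged into one kernel-verified Lean document; each statement's English description precedes it below -/
import Mathlib

section
/- Let A be a commutative ring and M a finitely presented A-module. Then the canonical morphism M ⊗_A A[[t]] → M[[t]] is an isomorphism. -/
open TensorProduct

/-- For a commutative ring `A` and an `A`-module `M`, the canonical `A`-linear map
`M ⊗[A] A[[t]] → M[[t]]`, where `M[[t]]` is realized as the module `ℕ → M` of
coefficient sequences; `m ⊗ f` is sent to the series whose `n`-th coefficient is
`(coeff n f) • m`. -/
noncomputable def powerSeriesTensorMap (A M : Type*) [CommRing A] [AddCommGroup M]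
    [Module A M] : M ⊗[A] PowerSeries A →ₗ[A] (ℕ → M) :=
  TensorProduct.lift <| LinearMap.mk₂ A (fun m f n => (PowerSeries.coeff (R := A) n f) • m)
    (fun m₁ m₂ f => by funext n; exact smul_add _ _ _)
    (fun c m f => by funext n; exact smul_comm _ _ _)
    (fun m f g => by funext n; simp only [map_add, add_smul]; rfl)
    (fun c m f => by funext n; simp only [map_smul, smul_eq_mul, mul_smul]; rfl)

/-!
Identifying `A[[t]]` with `ℕ → A` through coefficients, the map becomes the canonical map
`M ⊗[A] (ι → A) → (ι → M)` for `ι = ℕ`. Both sides are right exact in `M` (the tensor product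
always, the product because surjections split pointwise) and the map is an isomorphism for
finite free `M`. Applying it to a finite presentation `A^m → A^n → M → 0`, the five lemma
gives bijectivity for `M`.
-/

lemma Function.Exact.comp_left {M N P : Type*} [Zero P] {f : M → N} {g : N → P}
    (h : Function.Exact f g) (ι : Type*) :
    Function.Exact (fun x : ι → M => f ∘ x) (fun y : ι → N => g ∘ y) := by
  intro y
  constructor
  · intro hy
    choose x hx using fun i => (h (y i)).1 (congrFun hy i)
    exact ⟨x, funext hx⟩
  · rintro ⟨x, rfl⟩
    funext i
    exact h.apply_apply_eq_zero (x i)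

namespace TensorProduct

variable {A : Type*} [CommSemiring A] {M N : Type*} [AddCommMonoid M] [Module A M]
  [AddCommMonoid N] [Module A N] (ι : Type*)

lemma compLeft_comp_piScalarRightHom (l : M →ₗ[A] N) :
    l.compLeft ι ∘ₗ piScalarRightHom A A M ι =
      piScalarRightHom A A N ι ∘ₗ l.rTensor (ι → A) := by
  ext m f i
  simp

lemma piScalarRightHom_bijective_of_free (κ : Type*) [Finite κ] :
    Function.Bijective (piScalarRightHom A A (κ → A) ι) := by
  have := Fintype.ofFinite κ
  classical
  have h (x : (κ → A) ⊗[A] (ι → A)) : piScalarRightHom A A (κ → A) ι x =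
      Function.swap (piScalarRight A A (ι → A) κ (TensorProduct.comm A _ _ x)) := by
    induction x with
    | zero => simp only [map_zero]; rfl
    | tmul v f => funext i k; simp [Function.swap, mul_comm]
    | add x y hx hy => simp only [map_add, hx, hy]; rfl
  rw [funext h]
  exact Function.swap_bijective.comp ((piScalarRight A A (ι → A) κ).bijective.comp
    (TensorProduct.comm A _ _).bijective)

theorem piScalarRightHom_bijective {A M : Type*} [CommRing A] [AddCommGroup M] [Module A M]
    [Module.FinitePresentation A M] : Function.Bijective (piScalarRightHom A A M ι) := by
  obtain ⟨n, m, f, g, hf, hgf⟩ := Module.FinitePresentation.exists_fin' A M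
  exact LinearMap.bijective_of_surjective_of_bijective_of_right_exact
    (g.rTensor (ι → A)) (f.rTensor (ι → A)) (g.compLeft ι) (f.compLeft ι)
    _ _ _ (compLeft_comp_piScalarRightHom ι g) (compLeft_comp_piScalarRightHom ι f)
    (rTensor_exact _ hgf hf) (hgf.comp_left ι)
    (piScalarRightHom_bijective_of_free ι _).2 (piScalarRightHom_bijective_of_free ι _)
    (LinearMap.rTensor_surjective _ hf) (Function.Surjective.comp_left hf)

end TensorProduct

noncomputable def PowerSeries.coeffLinearEquiv (A : Type*) [Semiring A] :
    PowerSeries A ≃ₗ[A] (ℕ → A) where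
  toFun f n := PowerSeries.coeff n f
  map_add' f g := by funext n; simp
  map_smul' c f := by funext n; simp
  invFun := PowerSeries.mk
  left_inv f := by ext n; simp
  right_inv F := by funext n; simp

/-- If `M` is a finitely presented `A`-module, the canonical map
`M ⊗[A] A[[t]] → M[[t]]` is an isomorphism. -/
theorem powerSeriesTensorMap_bijective (A M : Type*) [CommRing A] [AddCommGroup M]
    [Module A M] [Module.FinitePresentation A M] :
    Function.Bijective (powerSeriesTensorMap A M) := by
  have h : powerSeriesTensorMap A M =
      piScalarRightHom A A M ℕ ∘ₗ (PowerSeries.coeffLinearEquiv A).toLinearMap.lTensor M := by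
    ext m f n
    simp [powerSeriesTensorMap, PowerSeries.coeffLinearEquiv]
  rw [h]
  exact (piScalarRightHom_bijective ℕ).comp (LinearEquiv.lTensor M _).bijective
end

section
/- Let R be a commutative ring, f = t − r₁ and g = ∏_{i=2}^{l}(t − r_i) in R[t], with r_i − r_j invertible in R for i ≠ j. Then the f-adic completion of R[t, g^{-1}] is isomorphic as an R[t, g^{-1}]-algebra to R[[s]] (via s ↦ t − r₁), i.e., to the power series ring over R. -/
/-
Taylor expansion at `r₁`, `p ↦ p(X + r₁)` read in `R⟦X⟧`, sends `g` to a power series with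
constant term `g(r₁) = ∏ (r₁ - rᵢ)`, a unit, so it extends to `B = R[X][1/g]`. For every `n` it
identifies `B ⧸ (fⁿ)` with `R⟦X⟧ ⧸ (Xⁿ)`: both are `R[X] ⧸ ((X - r₁)ⁿ)`, the first because `g` is
invertible modulo `(X - r₁)ⁿ`. As `R⟦X⟧` is `X`-adically complete, passing to the limit over `n`
identifies the `f`-adic completion of `B` with `R⟦X⟧`.
-/

open Polynomial

namespace AdicCompletion

variable {A S : Type*} [CommRing A] [CommRing S] {I : Ideal A}

theorem factorPow_evalₐ {m n : ℕ} (hmn : m ≤ n) (x : AdicCompletion I A) :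
    Ideal.Quotient.factorPow I hmn (evalₐ I n x) = evalₐ I m x := by
  obtain ⟨x, rfl⟩ := mk_surjective I A x
  simp only [evalₐ_mk, Ideal.Quotient.factor_mk, Ideal.mk_eq_mk I hmn]

variable {J : Ideal S} {φ : A →+* S}
  (hcomap : ∀ n, (J ^ n).comap φ = I ^ n) (hsurj : ∀ n (s : S), ∃ a, φ a - s ∈ J ^ n)

noncomputable def quotientPowEquiv (n : ℕ) : A ⧸ I ^ n ≃+* S ⧸ J ^ n :=
  RingEquiv.ofBijective (Ideal.quotientMap (J ^ n) φ (hcomap n).ge)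
    ⟨Ideal.quotientMap_injective' (hcomap n).le, fun s ↦ by
      obtain ⟨s, rfl⟩ := Ideal.Quotient.mk_surjective s
      obtain ⟨a, ha⟩ := hsurj n s
      exact ⟨Ideal.Quotient.mk _ a, Ideal.Quotient.eq.mpr ha⟩⟩

theorem quotientPowEquiv_mk (n : ℕ) (a : A) :
    quotientPowEquiv hcomap hsurj n (Ideal.Quotient.mk _ a) = Ideal.Quotient.mk _ (φ a) :=
  rfl

theorem factorPow_quotientPowEquiv {m n : ℕ} (hmn : m ≤ n) (x : A ⧸ I ^ n) :
    Ideal.Quotient.factorPow J hmn (quotientPowEquiv hcomap hsurj n x) =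
      quotientPowEquiv hcomap hsurj m (Ideal.Quotient.factorPow I hmn x) := by
  obtain ⟨a, rfl⟩ := Ideal.Quotient.mk_surjective x
  rfl

theorem factorPow_comp_quotientPowEquiv_comp_evalₐ {m n : ℕ} (hmn : m ≤ n) :
    (Ideal.Quotient.factorPow J hmn).comp
        ((quotientPowEquiv hcomap hsurj n).toRingHom.comp (evalₐ I n).toRingHom) =
      (quotientPowEquiv hcomap hsurj m).toRingHom.comp (evalₐ I m).toRingHom := by
  ext x
  simp [factorPow_quotientPowEquiv, factorPow_evalₐ]

theorem factorPow_comp_quotientPowEquiv_symm_comp_mk {m n : ℕ} (hmn : m ≤ n) :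
    (Ideal.Quotient.factorPow I hmn).comp
        ((quotientPowEquiv hcomap hsurj n).symm.toRingHom.comp
          (Ideal.Quotient.mk _)) =
      (quotientPowEquiv hcomap hsurj m).symm.toRingHom.comp
        (Ideal.Quotient.mk _) := by
  ext s
  apply (quotientPowEquiv hcomap hsurj m).injective
  simp [← factorPow_quotientPowEquiv]

noncomputable def liftQuotientPowEquiv [IsAdicComplete J S] : AdicCompletion I A →+* S :=
  IsAdicComplete.liftRingHom J _ fun hmn ↦
    factorPow_comp_quotientPowEquiv_comp_evalₐ hcomap hsurj hmn

theorem mk_liftQuotientPowEquiv [IsAdicComplete J S] (n : ℕ) (x : AdicCompletion I A) :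
    Ideal.Quotient.mk (J ^ n) (liftQuotientPowEquiv hcomap hsurj x) =
      quotientPowEquiv hcomap hsurj n (evalₐ I n x) :=
  IsAdicComplete.mk_liftRingHom J _
    (fun hmn ↦ factorPow_comp_quotientPowEquiv_comp_evalₐ hcomap hsurj hmn) n x

noncomputable def ofQuotientPowEquiv : S →+* AdicCompletion I A :=
  liftRingHom I _ fun hmn ↦ factorPow_comp_quotientPowEquiv_symm_comp_mk hcomap hsurj hmn

theorem evalₐ_ofQuotientPowEquiv (n : ℕ) (s : S) :
    evalₐ I n (ofQuotientPowEquiv hcomap hsurj s) =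
      (quotientPowEquiv hcomap hsurj n).symm (Ideal.Quotient.mk (J ^ n) s) :=
  evalₐ_liftRingHom I _
    (fun hmn ↦ factorPow_comp_quotientPowEquiv_symm_comp_mk hcomap hsurj hmn) n s

variable [IsAdicComplete J S]

noncomputable def ringEquivOfIsAdicComplete : AdicCompletion I A ≃+* S :=
  RingEquiv.ofRingHom (liftQuotientPowEquiv hcomap hsurj) (ofQuotientPowEquiv hcomap hsurj)
    (RingHom.coe_inj <| IsHausdorff.funext' J fun n s ↦ by
      simp [mk_liftQuotientPowEquiv, evalₐ_ofQuotientPowEquiv])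
    (RingHom.ext fun x ↦ ext_evalₐ fun n ↦ by
      simp [mk_liftQuotientPowEquiv, evalₐ_ofQuotientPowEquiv])

theorem ringEquivOfIsAdicComplete_algebraMap (a : A) :
    ringEquivOfIsAdicComplete hcomap hsurj (algebraMap A (AdicCompletion I A) a) = φ a :=
  congrFun (IsHausdorff.funext' J
    (f := fun a ↦ ringEquivOfIsAdicComplete hcomap hsurj (algebraMap A _ a)) (g := φ) fun n a ↦ by
    simp [ringEquivOfIsAdicComplete, algebraMap_apply, mk_liftQuotientPowEquiv,
      quotientPowEquiv_mk]) a

end AdicCompletion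

theorem IsLocalization.comap_eq_map_comap_comp {A B S : Type*} [CommRing A] [CommRing B]
    [CommRing S] [Algebra A B] (M : Submonoid A) [IsLocalization M B] (φ : B →+* S)
    (K : Ideal S) :
    K.comap φ = (K.comap (φ.comp (algebraMap A B))).map (algebraMap A B) :=
  (IsLocalization.map_under M B (K.comap φ)).symm

section

open scoped PowerSeries

variable {R : Type*} [CommRing R]

theorem PowerSeries.X_pow_dvd_sub_trunc (n : ℕ) (s : R⟦X⟧) :
    PowerSeries.X ^ n ∣ s - (PowerSeries.trunc n s : R⟦X⟧) :=
  ⟨_, sub_eq_iff_eq_add.mpr (PowerSeries.eq_X_pow_mul_shift_add_trunc n s)⟩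

namespace Polynomial

theorem coe_X_pow_dvd_iff {n : ℕ} {p : R[X]} :
    (PowerSeries.X : R⟦X⟧) ^ n ∣ p ↔ X ^ n ∣ p := by
  simp only [PowerSeries.X_pow_dvd_iff, Polynomial.X_pow_dvd_iff, coeff_coe]

theorem X_pow_dvd_taylor_iff {r : R} {n : ℕ} {p : R[X]} :
    X ^ n ∣ taylor r p ↔ (X - C r) ^ n ∣ p := by
  have h : taylorEquiv r ((X - C r) ^ n) = X ^ n := by
    change taylor r _ = _
    simp [taylor_X, taylor_C]
  rw [← h, show taylor r p = taylorEquiv r p from rfl, map_dvd_iff]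

noncomputable def toPowerSeriesAt (r : R) : R[X] →+* R⟦X⟧ :=
  coeToPowerSeries.ringHom.comp (taylorEquiv r).toRingHom

theorem toPowerSeriesAt_apply (r : R) (p : R[X]) :
    toPowerSeriesAt r p = (taylor r p : R⟦X⟧) :=
  rfl

theorem comap_toPowerSeriesAt_span_X_pow (r : R) (n : ℕ) :
    ((Ideal.span {PowerSeries.X} : Ideal R⟦X⟧) ^ n).comap (toPowerSeriesAt r) =
      Ideal.span {X - C r} ^ n := by
  ext p
  simp only [Ideal.mem_comap, Ideal.span_singleton_pow, Ideal.mem_span_singleton,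
    toPowerSeriesAt_apply, coe_X_pow_dvd_iff, X_pow_dvd_taylor_iff]

theorem exists_toPowerSeriesAt_sub_mem_span_X_pow (r : R) (n : ℕ) (s : R⟦X⟧) :
    ∃ p, toPowerSeriesAt r p - s ∈ (Ideal.span {PowerSeries.X} : Ideal R⟦X⟧) ^ n := by
  refine ⟨taylor (-r) (PowerSeries.trunc n s), ?_⟩
  rw [toPowerSeriesAt_apply, taylor_taylor, add_neg_cancel, taylor_zero, Ideal.span_singleton_pow,
    Ideal.mem_span_singleton, ← dvd_neg, neg_sub]
  exact PowerSeries.X_pow_dvd_sub_trunc n s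

theorem isUnit_toPowerSeriesAt {r : R} {g : R[X]} (hg : IsUnit (g.eval r)) :
    IsUnit (toPowerSeriesAt r g) := by
  rwa [PowerSeries.isUnit_iff_constantCoeff, toPowerSeriesAt_apply, constantCoeff_coe,
    taylor_coeff_zero]

variable {r : R} {g : R[X]} (hg : IsUnit (g.eval r))

noncomputable def awayToPowerSeriesAt : Localization.Away g →+* R⟦X⟧ :=
  IsLocalization.Away.lift g (isUnit_toPowerSeriesAt hg)

theorem awayToPowerSeriesAt_algebraMap (p : R[X]) :
    awayToPowerSeriesAt hg (algebraMap R[X] (Localization.Away g) p) = toPowerSeriesAt r p :=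
  IsLocalization.Away.lift_eq g _ p

theorem comap_awayToPowerSeriesAt_span_X_pow (n : ℕ) :
    ((Ideal.span {PowerSeries.X} : Ideal R⟦X⟧) ^ n).comap (awayToPowerSeriesAt hg) =
      Ideal.span {algebraMap R[X] (Localization.Away g) (X - C r)} ^ n := by
  rw [IsLocalization.comap_eq_map_comap_comp (Submonoid.powers g), awayToPowerSeriesAt,
    IsLocalization.Away.lift_comp, comap_toPowerSeriesAt_span_X_pow, Ideal.map_pow,
    Ideal.map_span, Set.image_singleton]

theorem exists_awayToPowerSeriesAt_sub_mem_span_X_pow (n : ℕ) (s : R⟦X⟧) :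
    ∃ b, awayToPowerSeriesAt hg b - s ∈ (Ideal.span {PowerSeries.X} : Ideal R⟦X⟧) ^ n := by
  obtain ⟨p, hp⟩ := exists_toPowerSeriesAt_sub_mem_span_X_pow r n s
  exact ⟨algebraMap _ _ p, by rwa [awayToPowerSeriesAt_algebraMap]⟩

noncomputable def adicCompletionAwayEquiv :
    AdicCompletion (Ideal.span {algebraMap R[X] (Localization.Away g) (X - C r)})
      (Localization.Away g) ≃+* R⟦X⟧ :=
  AdicCompletion.ringEquivOfIsAdicComplete (comap_awayToPowerSeriesAt_span_X_pow hg)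
    (exists_awayToPowerSeriesAt_sub_mem_span_X_pow hg)

theorem adicCompletionAwayEquiv_algebraMap (p : R[X]) :
    adicCompletionAwayEquiv hg
        (algebraMap _ _ (algebraMap R[X] (Localization.Away g) p)) = (taylor r p : R⟦X⟧) := by
  rw [adicCompletionAwayEquiv, AdicCompletion.ringEquivOfIsAdicComplete_algebraMap,
    awayToPowerSeriesAt_algebraMap, toPowerSeriesAt_apply]

end Polynomial

end

/-- Let `R` be a commutative ring, `r₁, …, r_l ∈ R` with `r_i − r_j` invertible for
`i ≠ j`, `f = t − r₁`, `g = ∏_{i=2}^l (t − r_i)`. Then the `f`-adic completion of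
`B = R[t, g⁻¹]` is isomorphic, as an `R`-algebra and compatibly with `B` (via
`s ↦ t − r₁`, i.e. the image of `t` is `s + r₁`), to the power series ring `R[[s]]`. -/
theorem adicCompletion_iso_powerSeries (R : Type*) [CommRing R]
    (l : ℕ) (hl : 0 < l) (r : Fin l → R)
    (hr : ∀ i j : Fin l, i ≠ j → IsUnit (r i - r j)) :
    let r₁ : R := r ⟨0, hl⟩
    let g : R[X] := ∏ i ∈ Finset.univ.erase ⟨0, hl⟩, (X - C (r i))
    let B := Localization.Away g
    let f : B := algebraMap R[X] B (X - C r₁)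
    ∃ e : AdicCompletion (Ideal.span {f}) B ≃+* PowerSeries R,
      (∀ a : R, e (algebraMap B (AdicCompletion (Ideal.span {f}) B)
          (algebraMap R[X] B (C a))) = PowerSeries.C a) ∧
      e (algebraMap B (AdicCompletion (Ideal.span {f}) B)
          (algebraMap R[X] B X)) = PowerSeries.X + PowerSeries.C r₁ := by
  intro r₁ g B f
  have hg : IsUnit (g.eval r₁) := by
    rw [eval_prod, IsUnit.prod_iff]
    intro i hi
    simpa using hr _ _ (Finset.ne_of_mem_erase hi).symm
  refine ⟨adicCompletionAwayEquiv hg, fun a ↦ ?_, ?_⟩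
  · rw [adicCompletionAwayEquiv_algebraMap, taylor_C, coe_C]
  · rw [adicCompletionAwayEquiv_algebraMap, taylor_X, coe_add, coe_X, coe_C]
end
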